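/- arXiv:1404.4388 — 7 statements merged into one kernel-verified Lean document; each statement's English description precedes it below -/
import Mathlib

section
/- The Bellman optimality operator T has a unique fixed point v* (i.e., v* is the unique function with T v* = v*), and value iteration converges to it geometrically: for every v₀ : S → ℝ and every n ∈ ℕ, ‖T^[n] v₀ − v*‖_∞ ≤ β^n · ‖v₀ − v*‖_∞; consequently the sequence of iterates T^[n] v₀ converges to v* for every initial v₀. -/
/-!
In the sup norm, `T` is a `β`-contraction: for a fixed action the expected cost-to-go is a
probability average, hence `1`-Lipschitz, and a minimum over finitely many actions moves by no
more than the largest of the individual moves. Banach's fixed-point theorem gives the unique fixed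
point and convergence, and the geometric rate is the Lipschitz bound `β ^ n` of `T^[n]`.
-/

open Filter

theorem Finset.inf'_sub_inf'_le {ι α : Type*} [AddCommGroup α] [LinearOrder α]
    [IsOrderedAddMonoid α] {s : Finset ι} (hs : s.Nonempty) {f g : ι → α} {C : α}
    (h : ∀ i ∈ s, f i - g i ≤ C) : s.inf' hs f - s.inf' hs g ≤ C := by
  obtain ⟨i, hi, hgi⟩ := s.exists_mem_eq_inf' hs g
  rw [hgi, sub_le_iff_le_add]
  exact (s.inf'_le f hi).trans (sub_le_iff_le_add.mp (h i hi))

theorem sum_mul_le_norm_of_sum_eq_one {ι : Type*} [Fintype ι] {p : ι → ℝ}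
    (hp0 : ∀ i, 0 ≤ p i) (hp1 : ∑ i, p i = 1) (u : ι → ℝ) : ∑ i, p i * u i ≤ ‖u‖ :=
  calc ∑ i, p i * u i ≤ ∑ i, p i * ‖u‖ := by
        gcongr with i
        · exact hp0 i
        · exact (le_abs_self _).trans (norm_le_pi_norm u i)
    _ = ‖u‖ := by rw [← Finset.sum_mul, hp1, one_mul]

theorem LipschitzWith.dist_iterate_le_of_isFixedPt {α : Type*} [PseudoMetricSpace α] {K : NNReal}
    {f : α → α} (hf : LipschitzWith K f) {y : α} (hy : Function.IsFixedPt f y) (x : α) (n : ℕ) :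
    dist (f^[n] x) y ≤ K ^ n * dist x y := by
  simpa only [(hy.iterate n).eq, NNReal.coe_pow] using (hf.iterate n).dist_le_mul x y

section Bellman

variable {S A : Type*} [Fintype S] [Fintype A] [Nonempty A]

noncomputable def bellmanOperator (β : ℝ) (c : S → A → ℝ) (P : S → A → S → ℝ) (v : S → ℝ) :
    S → ℝ :=
  fun s => Finset.univ.inf' Finset.univ_nonempty fun a => c s a + β * ∑ s', P s a s' * v s'

variable {β : ℝ} {c : S → A → ℝ} {P : S → A → S → ℝ}

theorem bellmanOperator_sub_le (hβ0 : 0 ≤ β) (hP0 : ∀ s a s', 0 ≤ P s a s')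
    (hP1 : ∀ s a, ∑ s', P s a s' = 1) (v w : S → ℝ) (s : S) :
    bellmanOperator β c P v s - bellmanOperator β c P w s ≤ β * ‖v - w‖ := by
  refine Finset.inf'_sub_inf'_le _ fun a _ => ?_
  have hexp := sum_mul_le_norm_of_sum_eq_one (hP0 s a) (hP1 s a) (v - w)
  simp only [Pi.sub_apply, mul_sub, Finset.sum_sub_distrib] at hexp
  linarith [mul_le_mul_of_nonneg_left hexp hβ0]

theorem lipschitzWith_bellmanOperator (hβ0 : 0 ≤ β) (hP0 : ∀ s a s', 0 ≤ P s a s')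
    (hP1 : ∀ s a, ∑ s', P s a s' = 1) :
    LipschitzWith ⟨β, hβ0⟩ (bellmanOperator β c P) := by
  refine LipschitzWith.of_dist_le_mul fun v w => ?_
  rw [dist_pi_le_iff (by positivity)]
  intro s
  rw [Real.dist_eq, abs_sub_le_iff, dist_eq_norm]
  exact ⟨bellmanOperator_sub_le hβ0 hP0 hP1 v w s,
    norm_sub_rev v w ▸ bellmanOperator_sub_le hβ0 hP0 hP1 w v s⟩

end Bellman

theorem bellman_unique_fixed_point_value_iteration_general
    {S A : Type*} [Fintype S] [Fintype A] [Nonempty A]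
    (β : ℝ) (hβ0 : 0 ≤ β) (hβ1 : β < 1)
    (c : S → A → ℝ) (P : S → A → S → ℝ)
    (hP0 : ∀ s a s', 0 ≤ P s a s') (hP1 : ∀ s a, ∑ s', P s a s' = 1)
    (T : (S → ℝ) → (S → ℝ))
    (hT : ∀ v s, T v s = Finset.univ.inf' Finset.univ_nonempty
          (fun a => c s a + β * ∑ s', P s a s' * v s')) :
    ∃ vstar : S → ℝ, T vstar = vstar ∧ (∀ v : S → ℝ, T v = v → v = vstar) ∧
      ∀ v₀ : S → ℝ,
        (∀ n : ℕ, ‖T^[n] v₀ - vstar‖ ≤ β ^ n * ‖v₀ - vstar‖) ∧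
        Tendsto (fun n : ℕ => T^[n] v₀) atTop (nhds vstar) := by
  obtain rfl : T = bellmanOperator β c P := funext fun v => funext (hT v)
  have hK : ContractingWith ⟨β, hβ0⟩ (bellmanOperator β c P) :=
    ⟨hβ1, lipschitzWith_bellmanOperator hβ0 hP0 hP1⟩
  refine ⟨_, hK.fixedPoint_isFixedPt, fun v hv => hK.fixedPoint_unique hv, fun v₀ =>
    ⟨fun n => ?_, hK.tendsto_iterate_fixedPoint v₀⟩⟩
  rw [← dist_eq_norm, ← dist_eq_norm]
  exact hK.2.dist_iterate_le_of_isFixedPt hK.fixedPoint_isFixedPt v₀ n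

/-- The Bellman optimality operator of a finite MDP has a unique fixed point `v*`,
and value iteration converges to it geometrically from any starting point. -/
theorem bellman_unique_fixed_point_value_iteration
    {S A : Type*} [Fintype S] [Nonempty S] [Fintype A] [Nonempty A]
    (β : ℝ) (hβ0 : 0 ≤ β) (hβ1 : β < 1)
    (c : S → A → ℝ) (P : S → A → S → ℝ)
    (hP0 : ∀ s a s', 0 ≤ P s a s') (hP1 : ∀ s a, ∑ s', P s a s' = 1)
    (T : (S → ℝ) → (S → ℝ))
    (hT : ∀ v s, T v s = Finset.univ.inf' Finset.univ_nonempty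
          (fun a => c s a + β * ∑ s', P s a s' * v s')) :
    ∃ vstar : S → ℝ, T vstar = vstar ∧ (∀ v : S → ℝ, T v = v → v = vstar) ∧
      ∀ v₀ : S → ℝ,
        (∀ n : ℕ, ‖T^[n] v₀ - vstar‖ ≤ β ^ n * ‖v₀ - vstar‖) ∧
        Tendsto (fun n : ℕ => T^[n] v₀) atTop (nhds vstar) :=
  bellman_unique_fixed_point_value_iteration_general β hβ0 hβ1 c P hP0 hP1 T hT
end

section
/- An optimal stationary deterministic policy exists and is obtained greedily from v*: if v* is the unique fixed point of the Bellman optimality operator T, and π : S → A is any deterministic policy such that for every s ∈ S the action π(s) attains the minimum in (T v*)(s) = min_{a ∈ A} (c s a + β · ∑_{s'} P s a s' · v* s'), then the unique fixed point v_π of the policy-evaluation operator T_π equals v*. -/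
/-- A deterministic stationary policy that is greedy with respect to the optimal value
function `v*` (the unique fixed point of the Bellman optimality operator) is optimal:
its value function `v_π` (the unique fixed point of its policy-evaluation operator)
equals `v*`. -/
theorem greedy_policy_is_optimal
    {S A : Type*} [Fintype S] [Nonempty S] [Fintype A] [Nonempty A]
    (β : ℝ) (hβ0 : 0 ≤ β) (hβ1 : β < 1)
    (c : S → A → ℝ) (P : S → A → S → ℝ)
    (hP0 : ∀ s a s', 0 ≤ P s a s') (hP1 : ∀ s a, ∑ s', P s a s' = 1)
    (T : (S → ℝ) → (S → ℝ))
    (hT : ∀ v s, T v s = Finset.univ.inf' Finset.univ_nonempty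
          (fun a => c s a + β * ∑ s', P s a s' * v s'))
    (vstar : S → ℝ) (hvstar : T vstar = vstar)
    (π : S → A)
    (hgreedy : ∀ s, c s (π s) + β * ∑ s', P s (π s) s' * vstar s' = T vstar s)
    (Tπ : (S → ℝ) → (S → ℝ))
    (hTπ : ∀ v s, Tπ v s = c s (π s) + β * ∑ s', P s (π s) s' * v s')
    (vπ : S → ℝ) (hvπ : Tπ vπ = vπ) :
    vπ = vstar := by
  -- vstar is also a fixed point of Tπ
  have hfix : ∀ s, Tπ vstar s = vstar s := by
    intro s
    rw [hTπ, hgreedy, hvstar]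
  -- let M be the max of |vπ - vstar|
  set M : ℝ := Finset.univ.sup' Finset.univ_nonempty (fun s => |vπ s - vstar s|) with hM
  have key : ∀ s : S, |vπ s - vstar s| ≤ β * M := by
    intro s
    have h1 : vπ s - vstar s = β * ∑ s', P s (π s) s' * (vπ s' - vstar s') := by
      have := hfix s
      rw [hTπ] at this
      have h2 : vπ s = c s (π s) + β * ∑ s', P s (π s) s' * vπ s' := by
        conv_lhs => rw [← hvπ, hTπ]
      rw [h2, ← this]
      simp only [mul_sub, Finset.sum_sub_distrib]
      ring
    rw [h1, abs_mul, abs_of_nonneg hβ0]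
    gcongr
    calc |∑ s', P s (π s) s' * (vπ s' - vstar s')|
        ≤ ∑ s', |P s (π s) s' * (vπ s' - vstar s')| := Finset.abs_sum_le_sum_abs _ _
      _ ≤ ∑ s' : S, P s (π s) s' * M := by
          apply Finset.sum_le_sum
          intro s' _
          rw [abs_mul, abs_of_nonneg (hP0 s (π s) s')]
          apply mul_le_mul_of_nonneg_left _ (hP0 s (π s) s')
          exact Finset.le_sup' (fun t => |vπ t - vstar t|) (Finset.mem_univ s')
      _ = M := by rw [← Finset.sum_mul, hP1, one_mul]
  have hMle : M ≤ β * M := by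
    obtain ⟨s, _, hs⟩ := Finset.exists_mem_eq_sup' Finset.univ_nonempty
      (fun s => |vπ s - vstar s|)
    calc M = |vπ s - vstar s| := hs
      _ ≤ β * M := key s
  have hM0 : M ≤ 0 := by nlinarith
  funext s
  have := key s
  have habs : |vπ s - vstar s| ≤ 0 := le_trans (Finset.le_sup' (fun t => |vπ t - vstar t|) (Finset.mem_univ s)) hM0
  have : vπ s - vstar s = 0 := abs_nonpos_iff.mp habs
  linarith
end

section
/- The Bellman backup preserves the class of pointwise minima of finitely many linear functions, with an explicitly constructed representing set: let Γ' = { γ' : I → ℝ | γ' = c a + β · ∑_{z ∈ Z} (M a z).mulVec γ_z for some a ∈ A and some family (γ_z)_{z ∈ Z} of elements of Γ }, which is a finite nonempty set. Then for every p : I → ℝ, min_{a ∈ A} ( ∑_i (c a) i · p i + β · ∑_{z ∈ Z} v_Γ( (M a z)ᵀ.mulVec p ) ) = v_{Γ'}(p). -/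
/-!
Since `γ ⬝ᵥ (Mᵀ *ᵥ p) = (M *ᵥ γ) ⬝ᵥ p`, and a sum of independent minima is the minimum of the sums
over choice functions, for `β ≥ 0` the term `β ∑_z min_{γ ∈ Γ} γ ⬝ᵥ (M a z)ᵀ *ᵥ p` is the minimum
over `z ↦ γ_z ∈ Γ` of `β ∑_z (M a z *ᵥ γ_z) ⬝ᵥ p`. Adding the cost term and minimising over `a`
leaves a minimum over pairs `(a, (γ_z)_z)` of linear functions of `p`, whose coefficient vectors
make up `Γ'`.
-/

open Finset Matrix

theorem Monotone.map_finset_inf' {ι α β : Type*} [LinearOrder α] [SemilatticeInf β] {f : α → β}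
    (hf : Monotone f) {s : Finset ι} (hs : s.Nonempty) (g : ι → α) :
    f (s.inf' hs g) = s.inf' hs (f ∘ g) :=
  apply_inf'_eq_inf'_comp hs f hf.map_inf

theorem Finset.sum_inf'_eq_inf'_piFinset {ι κ M : Type*} [Fintype κ] [DecidableEq κ]
    [AddCommMonoid M] [LinearOrder M] [IsOrderedAddMonoid M]
    (s : Finset ι) (hs : s.Nonempty) (f : κ → ι → M) :
    ∑ k, s.inf' hs (f k) =
      (Fintype.piFinset fun _ => s).inf' (Fintype.piFinset_nonempty.2 fun _ => hs)
        fun g => ∑ k, f k (g k) := by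
  apply le_antisymm
  · exact le_inf' _ _ fun g hg => sum_le_sum fun k _ => inf'_le _ (Fintype.mem_piFinset.1 hg k)
  · choose g hgs hg using fun k => exists_mem_eq_inf' hs (f k)
    calc _ ≤ ∑ k, f k (g k) := inf'_le _ (Fintype.mem_piFinset.2 hgs)
      _ = ∑ k, s.inf' hs (f k) := by simp only [hg]

namespace Bellman

variable {I A Z R : Type*} [Fintype I] [Fintype Z]

section Vector

variable [CommSemiring R] (β : R) (c : A → I → R) (M : A → Z → Matrix I I R)

def backupVector (a : A) (g : Z → I → R) : I → R :=
  c a + β • ∑ z, M a z *ᵥ g z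

theorem backupVector_dotProduct (a : A) (g : Z → I → R) (p : I → R) :
    backupVector β c M a g ⬝ᵥ p = c a ⬝ᵥ p + β * ∑ z, g z ⬝ᵥ (M a z)ᵀ *ᵥ p := by
  simp only [backupVector, add_dotProduct, smul_dotProduct, sum_dotProduct, smul_eq_mul,
    dotProduct_mulVec, vecMul_transpose, dotProduct_comm (M a _ *ᵥ _)]

variable [Fintype A] [DecidableEq Z] [DecidableEq (I → R)]

def backupSet (Γ : Finset (I → R)) : Finset (I → R) :=
  (univ ×ˢ Fintype.piFinset fun _ => Γ).image fun ag => backupVector β c M ag.1 ag.2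

theorem coe_backupSet (Γ : Finset (I → R)) :
    (backupSet β c M Γ : Set (I → R)) =
      {γ' | ∃ (a : A) (g : Z → I → R), (∀ z, g z ∈ Γ) ∧ γ' = backupVector β c M a g} := by
  ext γ'
  simp [backupSet, eq_comm]

theorem backupSet_nonempty [Nonempty A] {Γ : Finset (I → R)} (hΓ : Γ.Nonempty) :
    (backupSet β c M Γ).Nonempty :=
  (univ_nonempty.product (Fintype.piFinset_nonempty.2 fun _ => hΓ)).image _

end Vector

variable [CommSemiring R] [LinearOrder R] [IsOrderedRing R] [Fintype A] [Nonempty A]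
  [DecidableEq Z] [DecidableEq (I → R)] {β : R} (c : A → I → R) (M : A → Z → Matrix I I R)

theorem inf'_backupSet_dotProduct (hβ : 0 ≤ β) {Γ : Finset (I → R)} (hΓ : Γ.Nonempty)
    (hΓ' : (backupSet β c M Γ).Nonempty) (p : I → R) :
    (backupSet β c M Γ).inf' hΓ' (· ⬝ᵥ p) =
      univ.inf' univ_nonempty fun a =>
        c a ⬝ᵥ p + β * ∑ z, Γ.inf' hΓ fun γ => γ ⬝ᵥ (M a z)ᵀ *ᵥ p := by
  have hmono (a : A) : Monotone fun x => c a ⬝ᵥ p + β * x :=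
    (monotone_id.const_mul hβ).const_add _
  simp only [backupSet, inf'_image, inf'_product_left, Function.comp_def,
    backupVector_dotProduct, sum_inf'_eq_inf'_piFinset, (hmono _).map_finset_inf']

end Bellman

open Bellman in
theorem bellman_backup_piecewise_linear_general
    {I A Z : Type*} [Fintype I] [Fintype A] [Nonempty A]
    [Fintype Z]
    (β : ℝ) (hβ0 : 0 ≤ β)
    (c : A → I → ℝ) (M : A → Z → Matrix I I ℝ)
    (Γ : Finset (I → ℝ)) (hΓ : Γ.Nonempty) :
    ∃ (Γ' : Finset (I → ℝ)) (hΓ' : Γ'.Nonempty),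
      (↑Γ' : Set (I → ℝ)) =
        {γ' : I → ℝ | ∃ (a : A) (g : Z → I → ℝ), (∀ z, g z ∈ Γ) ∧
          γ' = c a + β • ∑ z, (M a z).mulVec (g z)} ∧
      ∀ p : I → ℝ,
        Finset.univ.inf' Finset.univ_nonempty
          (fun a : A => ∑ i, c a i * p i +
            β * ∑ z, Γ.inf' hΓ (fun γ => ∑ i, γ i * (M a z)ᵀ.mulVec p i)) =
        Γ'.inf' hΓ' (fun γ' => ∑ i, γ' i * p i) := by
  classical
  exact ⟨backupSet β c M Γ, backupSet_nonempty β c M hΓ, coe_backupSet β c M Γ,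
    fun p => (inf'_backupSet_dotProduct c M hβ0 hΓ _ p).symm⟩

/-- The POMDP Bellman backup preserves the class of pointwise minima of finitely many
linear functions, with the explicitly constructed representing set
`Γ' = { c a + β • ∑ z, (M a z).mulVec γ_z : a ∈ A, γ_z ∈ Γ }`, which is a finite
nonempty set of vectors. -/
theorem bellman_backup_piecewise_linear
    {I A Z : Type*} [Fintype I] [Nonempty I] [Fintype A] [Nonempty A]
    [Fintype Z] [Nonempty Z]
    (β : ℝ) (hβ0 : 0 ≤ β) (hβ1 : β < 1)
    (c : A → I → ℝ) (M : A → Z → Matrix I I ℝ)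
    (hM0 : ∀ a z i j, 0 ≤ M a z i j)
    (hM1 : ∀ a i, ∑ z, ∑ j, M a z i j = 1)
    (Γ : Finset (I → ℝ)) (hΓ : Γ.Nonempty) :
    ∃ (Γ' : Finset (I → ℝ)) (hΓ' : Γ'.Nonempty),
      (↑Γ' : Set (I → ℝ)) =
        {γ' : I → ℝ | ∃ (a : A) (g : Z → I → ℝ), (∀ z, g z ∈ Γ) ∧
          γ' = c a + β • ∑ z, (M a z).mulVec (g z)} ∧
      ∀ p : I → ℝ,
        Finset.univ.inf' Finset.univ_nonempty
          (fun a : A => ∑ i, c a i * p i +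
            β * ∑ z, Γ.inf' hΓ (fun γ => ∑ i, γ i * (M a z)ᵀ.mulVec p i)) =
        Γ'.inf' hΓ' (fun γ' => ∑ i, γ' i * p i) :=
  bellman_backup_piecewise_linear_general β hβ0 c M Γ hΓ
end

section
/- The belief-space Bellman operator is a contraction and its fixed point is concave: the operator H is Lipschitz with constant β in the supremum distance on bounded functions on Δ, hence has a unique bounded fixed point v* : Δ → ℝ, and v* is concave on Δ. -/
/-!
The `σ(a,z,p)` of a belief `p` are nonnegative and sum to one over `z`, and the posteriors
`τ(a,z,p)` lie in `Δ`, so `∑_z σ · v(τ)` moves by at most `sup_Δ |v - w|`, and a minimum over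
actions keeps this bound. Hence `H` induces a `β`-contraction of `ℓ^∞(Δ)`, and Banach's theorem
gives a unique bounded fixed point, the limit of the value iterates `H^[n] 0`.

Since `σ` and the unnormalized posterior `p ᵥ* M a z` are linear in `p`, the map
`p ↦ σ(p) · v(τ(p))` is a perspective of `v`, concave whenever `v` is. Nonnegative sums and
finite minima preserve concavity, so every value iterate is concave, and so is their pointwise
limit.
-/

open Filter Finset Function Matrix Set
open scoped Topology ENNReal

section Convexity

variable {E : Type*} [AddCommGroup E] [Module ℝ E] {s : Set E}

theorem ConcaveOn.finset_inf' {ι : Type*} {t : Finset ι} (ht : t.Nonempty)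
    {f : ι → E → ℝ} (hf : ∀ i ∈ t, ConcaveOn ℝ s (f i)) :
    ConcaveOn ℝ s fun x => t.inf' ht fun i => f i x := by
  simpa only [← Finset.inf'_apply] using
    Finset.inf'_induction ht f (fun _ h₁ _ h₂ => h₁.inf h₂) hf

theorem ConcaveOn.finset_sum {ι : Type*} {t : Finset ι} {f : ι → E → ℝ} (hs : Convex ℝ s)
    (hf : ∀ i ∈ t, ConcaveOn ℝ s (f i)) : ConcaveOn ℝ s fun x => ∑ i ∈ t, f i x := by
  simpa only [← Finset.sum_apply] using
    Finset.sum_induction f (ConcaveOn ℝ s) (fun _ _ h₁ h₂ => h₁.add h₂)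
      (concaveOn_const 0 hs) hf

theorem concaveOn_of_tendsto {ι : Type*} {l : Filter ι} [l.NeBot] {F : ι → E → ℝ}
    {g : E → ℝ} (hs : Convex ℝ s) (hF : ∀ᶠ n in l, ConcaveOn ℝ s (F n))
    (hg : ∀ x ∈ s, Tendsto (fun n => F n x) l (𝓝 (g x))) : ConcaveOn ℝ s g :=
  ⟨hs, fun _ hx _ hy _ _ ha hb hab =>
    le_of_tendsto_of_tendsto (((hg _ hx).const_smul _).add ((hg _ hy).const_smul _))
      (hg _ (hs hx hy ha hb hab)) (hF.mono fun _ hn => hn.2 hx hy ha hb hab)⟩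

end Convexity

theorem Finset.abs_inf'_sub_inf'_le {ι : Type*} {t : Finset ι} (ht : t.Nonempty)
    {f g : ι → ℝ} {K : ℝ} (h : ∀ i ∈ t, |f i - g i| ≤ K) :
    |t.inf' ht f - t.inf' ht g| ≤ K := by
  have inf'_le_add : ∀ f g : ι → ℝ, (∀ i ∈ t, |f i - g i| ≤ K) → t.inf' ht f ≤ t.inf' ht g + K := by
    intro f g h
    obtain ⟨i, hi, hgi⟩ := t.exists_mem_eq_inf' ht g
    rw [hgi]
    linarith [t.inf'_le f hi, (abs_le.1 (h i hi)).2]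
  rw [abs_le]
  constructor
  · linarith [inf'_le_add g f fun i hi => abs_sub_comm (f i) (g i) ▸ h i hi]
  · linarith [inf'_le_add f g h]

noncomputable section Perspective

variable {E F : Type*} [AddCommGroup E] [Module ℝ E] [AddCommGroup F] [Module ℝ F]

def perspective (ℓ : E →ₗ[ℝ] ℝ) (L : E →ₗ[ℝ] F) (u : F → ℝ) (p : E) : ℝ :=
  if 0 < ℓ p then ℓ p * u ((ℓ p)⁻¹ • L p) else 0

variable {ℓ : E →ₗ[ℝ] ℝ} {L : E →ₗ[ℝ] F} {u : F → ℝ} {D : Set F} {s : Set E}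

theorem perspective_zero : perspective ℓ L 0 = 0 := by
  ext p; simp [perspective]

theorem perspective_of_nonpos {p : E} (hp : ℓ p ≤ 0) : perspective ℓ L u p = 0 := by
  simp [perspective, hp.not_gt]

theorem perspective_smul (p : E) {c : ℝ} (hc : 0 ≤ c) :
    perspective ℓ L u (c • p) = c * perspective ℓ L u p := by
  rcases hc.eq_or_lt with rfl | hc
  · simp [perspective]
  · have hcancel : (c * ℓ p)⁻¹ * c = (ℓ p)⁻¹ := by field_simp
    simp only [perspective, map_smul, smul_eq_mul, mul_pos_iff_of_pos_left hc, smul_smul,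
      hcancel]
    split_ifs <;> ring

theorem perspective_add_of_eq_zero {p q : E} (hℓ : ℓ p = 0) (hL : L p = 0) :
    perspective ℓ L u (p + q) = perspective ℓ L u q := by
  simp [perspective, hℓ, hL]

theorem abs_perspective_sub_le {w : F → ℝ} {K : ℝ} (huw : ∀ y ∈ D, |u y - w y| ≤ K)
    {p : E} (hℓ : 0 ≤ ℓ p) (hD : 0 < ℓ p → (ℓ p)⁻¹ • L p ∈ D) :
    |perspective ℓ L u p - perspective ℓ L w p| ≤ ℓ p * K := by
  rcases hℓ.eq_or_lt with hℓ | hℓ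
  · simp [perspective_of_nonpos hℓ.ge, ← hℓ]
  · simp only [perspective, if_pos hℓ, ← mul_sub, abs_mul, abs_of_pos hℓ]
    exact mul_le_mul_of_nonneg_left (huw _ (hD hℓ)) hℓ.le

theorem mul_perspective_add_mul_perspective_le (hu : ConcaveOn ℝ D u) {p q : E}
    (hp : 0 < ℓ p) (hq : 0 < ℓ q) (hpD : (ℓ p)⁻¹ • L p ∈ D) (hqD : (ℓ q)⁻¹ • L q ∈ D)
    {a b : ℝ} (ha : 0 ≤ a) (hb : 0 ≤ b) (hab : a + b = 1) :
    a * perspective ℓ L u p + b * perspective ℓ L u q ≤ perspective ℓ L u (a • p + b • q) := by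
  set r := ℓ (a • p + b • q)
  have hr_eq : r = a * ℓ p + b * ℓ q := by simp [r]
  have hr : 0 < r := by
    rcases ha.eq_or_lt with rfl | ha
    · rw [hr_eq]; simp_all
    · rw [hr_eq]; positivity
  have hcomb : r⁻¹ • L (a • p + b • q) =
      (a * ℓ p / r) • ((ℓ p)⁻¹ • L p) + (b * ℓ q / r) • ((ℓ q)⁻¹ • L q) := by
    simp only [map_add, map_smul, smul_add, smul_smul]
    congr 2 <;> field_simp
  have hjensen := hu.2 hpD hqD (by positivity : 0 ≤ a * ℓ p / r)
    (by positivity : 0 ≤ b * ℓ q / r) (by rw [← add_div, ← hr_eq, div_self hr.ne'])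
  rw [← hcomb, smul_eq_mul, smul_eq_mul] at hjensen
  simp only [perspective, if_pos hp, if_pos hq]
  rw [if_pos hr]
  calc a * (ℓ p * u ((ℓ p)⁻¹ • L p)) + b * (ℓ q * u ((ℓ q)⁻¹ • L q))
      = r * (a * ℓ p / r * u ((ℓ p)⁻¹ • L p) + b * ℓ q / r * u ((ℓ q)⁻¹ • L q)) := by
        field_simp
    _ ≤ r * u (r⁻¹ • L (a • p + b • q)) := mul_le_mul_of_nonneg_left hjensen hr.le

theorem ConcaveOn.perspective (hu : ConcaveOn ℝ D u) (hs : Convex ℝ s)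
    (hℓ : ∀ p ∈ s, 0 ≤ ℓ p) (hL : ∀ p ∈ s, ℓ p = 0 → L p = 0)
    (hD : ∀ p ∈ s, 0 < ℓ p → (ℓ p)⁻¹ • L p ∈ D) : ConcaveOn ℝ s (perspective ℓ L u) := by
  refine ⟨hs, fun p hp q hq a b ha hb hab => ?_⟩
  simp only [smul_eq_mul]
  rcases (hℓ p hp).eq_or_lt with hp0 | hp0
  · rw [perspective_add_of_eq_zero (by simp [← hp0]) (by simp [hL p hp hp0.symm]),
      perspective_smul q hb, perspective_of_nonpos hp0.ge, mul_zero, zero_add]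
  rcases (hℓ q hq).eq_or_lt with hq0 | hq0
  · rw [add_comm (a • p),
      perspective_add_of_eq_zero (by simp [← hq0]) (by simp [hL q hq hq0.symm]),
      perspective_smul p ha, perspective_of_nonpos hq0.ge, mul_zero, add_zero]
  exact mul_perspective_add_mul_perspective_le hu hp0 hq0 (hD p hp hp0) (hD q hq hq0) ha hb hab

end Perspective

noncomputable section SupContraction

variable {X : Type*} {S : Set X} {β : ℝ} {T : (X → ℝ) → X → ℝ}

def IsSupContractionOn (S : Set X) (β : ℝ) (T : (X → ℝ) → X → ℝ) : Prop :=
  ∀ v w K, (∀ q ∈ S, |v q - w q| ≤ K) → ∀ p ∈ S, |T v p - T w p| ≤ β * K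

def restrictLp (v : X → ℝ) (hv : ∃ B, ∀ p ∈ S, |v p| ≤ B) : lp (fun _ : S => ℝ) ∞ :=
  ⟨fun q => v q, memℓp_infty <| by
    obtain ⟨B, hB⟩ := hv
    exact ⟨B, by rintro _ ⟨q, rfl⟩; exact hB q q.2⟩⟩

def extendLp (f : lp (fun _ : S => ℝ) ∞) : X → ℝ := extend Subtype.val f 0

theorem extendLp_apply (f : lp (fun _ : S => ℝ) ∞) (q : S) : extendLp f q = f q :=
  Subtype.val_injective.extend_apply _ _ q

theorem abs_extendLp_le (f : lp (fun _ : S => ℝ) ∞) {p : X} (hp : p ∈ S) :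
    |extendLp f p| ≤ ‖f‖ := by
  simpa [extendLp_apply f ⟨p, hp⟩] using lp.norm_apply_le_norm ENNReal.top_ne_zero f ⟨p, hp⟩

namespace IsSupContractionOn

theorem eqOn (hT : IsSupContractionOn S β T) {v w : X → ℝ} (h : EqOn v w S) :
    EqOn (T v) (T w) S := fun p hp => by
  have := hT v w 0 (fun q hq => by simp [h hq]) p hp
  rwa [mul_zero, abs_nonpos_iff, sub_eq_zero] at this

theorem abs_le_add (hT : IsSupContractionOn S β T) {v : X → ℝ} {B : ℝ}
    (hv : ∀ q ∈ S, |v q| ≤ B) {p : X} (hp : p ∈ S) : |T v p| ≤ |T 0 p| + β * B := by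
  have := hT v 0 B (by simpa using hv) p hp
  linarith [abs_sub_abs_le_abs_sub (T v p) (T 0 p)]

theorem abs_sub_le_iSup (hT : IsSupContractionOn S β T) {v w : X → ℝ}
    (hv : ∃ B, ∀ p ∈ S, |v p| ≤ B) (hw : ∃ B, ∀ p ∈ S, |w p| ≤ B) :
    ∀ p ∈ S, |T v p - T w p| ≤ β * ⨆ q : S, |v q - w q| := by
  obtain ⟨Bv, hBv⟩ := hv
  obtain ⟨Bw, hBw⟩ := hw
  have hbdd : BddAbove (range fun q : S => |v q - w q|) := by
    refine ⟨Bv + Bw, ?_⟩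
    rintro _ ⟨q, rfl⟩
    exact (abs_sub _ _).trans (add_le_add (hBv q q.2) (hBw q q.2))
  exact hT v w _ fun q hq => le_ciSup hbdd (⟨q, hq⟩ : S)

/-- By `IsSupContractionOn.eqOn`, the padding by `0` off `S` in `extendLp` is immaterial. -/
def liftLp (hT : IsSupContractionOn S β T) (hT0 : ∃ C, ∀ p ∈ S, |T 0 p| ≤ C)
    (f : lp (fun _ : S => ℝ) ∞) : lp (fun _ : S => ℝ) ∞ :=
  restrictLp (T (extendLp f)) <| by
    obtain ⟨C, hC⟩ := hT0
    exact ⟨C + β * ‖f‖, fun p hp =>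
      (hT.abs_le_add (fun q hq => abs_extendLp_le f hq) hp).trans (by linarith [hC p hp])⟩

variable (hT : IsSupContractionOn S β T) (hT0 : ∃ C, ∀ p ∈ S, |T 0 p| ≤ C)

theorem liftLp_apply (f : lp (fun _ : S => ℝ) ∞) (q : S) :
    hT.liftLp hT0 f q = T (extendLp f) q :=
  rfl

theorem contractingWith_liftLp (hβ0 : 0 ≤ β) (hβ1 : β < 1) :
    ContractingWith ⟨β, hβ0⟩ (hT.liftLp hT0) := by
  refine ⟨hβ1, LipschitzWith.of_dist_le_mul fun f g => ?_⟩
  rw [dist_eq_norm, dist_eq_norm]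
  refine lp.norm_le_of_forall_le (by positivity) fun q => show _ ≤ β * _ from ?_
  have hfg : ∀ p ∈ S, |extendLp f p - extendLp g p| ≤ ‖f - g‖ := fun p hp => by
    simpa [extendLp_apply _ ⟨p, hp⟩] using
      lp.norm_apply_le_norm ENNReal.top_ne_zero (f - g) ⟨p, hp⟩
  simpa [liftLp_apply] using hT _ _ _ hfg q q.2

theorem liftLp_iterate_apply (n : ℕ) (q : S) : (hT.liftLp hT0)^[n] 0 q = T^[n] 0 q := by
  induction n generalizing q with
  | zero => rfl
  | succ n ih =>
    rw [iterate_succ_apply', iterate_succ_apply', liftLp_apply]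
    exact hT.eqOn (fun p hp => (extendLp_apply _ ⟨p, hp⟩).trans (ih ⟨p, hp⟩)) q.2

theorem exists_unique_fixedPoint (hT : IsSupContractionOn S β T)
    (hT0 : ∃ C, ∀ p ∈ S, |T 0 p| ≤ C) (hβ0 : 0 ≤ β) (hβ1 : β < 1) :
    ∃ v : X → ℝ, (∃ B, ∀ p ∈ S, |v p| ≤ B) ∧ (∀ p ∈ S, T v p = v p) ∧
      (∀ w : X → ℝ, (∃ B, ∀ p ∈ S, |w p| ≤ B) → (∀ p ∈ S, T w p = w p) →
        ∀ p ∈ S, w p = v p) ∧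
      ∀ p ∈ S, Tendsto (fun n => T^[n] 0 p) atTop (𝓝 (v p)) := by
  have hΦ := hT.contractingWith_liftLp hT0 hβ0 hβ1
  set f := ContractingWith.fixedPoint _ hΦ
  have hf : ∀ q : S, T (extendLp f) q = f q := fun q =>
    congrFun (congrArg Subtype.val (ContractingWith.fixedPoint_isFixedPt hΦ)) q
  refine ⟨extendLp f, ⟨‖f‖, fun p hp => abs_extendLp_le f hp⟩, fun p hp => ?_, ?_,
    fun p hp => ?_⟩
  · rw [hf ⟨p, hp⟩, extendLp_apply f ⟨p, hp⟩]
  · rintro w hw hwfix p hp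
    have hfix : IsFixedPt (hT.liftLp hT0) (restrictLp w hw) := Subtype.ext <| funext fun q =>
      (hT.eqOn (fun p hp => extendLp_apply _ ⟨p, hp⟩) q.2).trans (hwfix q q.2)
    exact (congrArg (fun g : lp (fun _ : S => ℝ) ∞ => g ⟨p, hp⟩)
      (hΦ.fixedPoint_unique hfix)).trans (extendLp_apply f ⟨p, hp⟩).symm
  · have hlim := ((lp.evalCLM ℝ (fun _ : S => ℝ) ∞ ⟨p, hp⟩).continuous.tendsto f).comp
      (hΦ.tendsto_iterate_fixedPoint 0)
    simpa [comp_def, lp.evalCLM, liftLp_iterate_apply, extendLp_apply f ⟨p, hp⟩] using hlim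

end IsSupContractionOn

end SupContraction

noncomputable section Belief

variable {I A Z : Type*} [Fintype I] [Fintype A] [Nonempty A] [Fintype Z]

def obsProb (N : Matrix I I ℝ) : (I → ℝ) →ₗ[ℝ] ℝ :=
  (∑ j, LinearMap.proj j) ∘ₗ N.vecMulLinear

theorem obsProb_apply (N : Matrix I I ℝ) (p : I → ℝ) : obsProb N p = ∑ j, (p ᵥ* N) j := by
  simp [obsProb]

variable {N : Matrix I I ℝ} {p : I → ℝ}

theorem vecMul_nonneg (hN : ∀ i j, 0 ≤ N i j) (hp : ∀ i, 0 ≤ p i) (j : I) :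
    0 ≤ (p ᵥ* N) j :=
  sum_nonneg fun i _ => mul_nonneg (hp i) (hN i j)

theorem obsProb_nonneg (hN : ∀ i j, 0 ≤ N i j) (hp : ∀ i, 0 ≤ p i) : 0 ≤ obsProb N p := by
  rw [obsProb_apply]
  exact sum_nonneg fun j _ => vecMul_nonneg hN hp j

theorem vecMul_eq_zero_of_obsProb_eq_zero (hN : ∀ i j, 0 ≤ N i j) (hp : ∀ i, 0 ≤ p i)
    (h : obsProb N p = 0) : p ᵥ* N = 0 := by
  rw [obsProb_apply, sum_eq_zero_iff_of_nonneg fun j _ => vecMul_nonneg hN hp j] at h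
  exact funext fun j => h j (mem_univ j)

theorem inv_smul_vecMul_mem_stdSimplex (hN : ∀ i j, 0 ≤ N i j) (hp : ∀ i, 0 ≤ p i)
    (h : 0 < obsProb N p) : (obsProb N p)⁻¹ • (p ᵥ* N) ∈ stdSimplex ℝ I := by
  refine ⟨fun j => smul_nonneg (inv_nonneg.2 h.le) (vecMul_nonneg hN hp j), ?_⟩
  simp only [Pi.smul_apply, smul_eq_mul, ← mul_sum, ← obsProb_apply, inv_mul_cancel₀ h.ne']

theorem sum_obsProb {M : Z → Matrix I I ℝ} (hM1 : ∀ i, ∑ z, ∑ j, M z i j = 1)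
    (hp : ∑ i, p i = 1) : ∑ z, obsProb (M z) p = 1 := by
  have h : ∀ z, obsProb (M z) p = ∑ i, p i * ∑ j, M z i j := fun z => by
    simp only [obsProb_apply, vecMul, dotProduct, mul_sum]
    exact sum_comm
  simp only [h]
  rw [sum_comm]
  simp [← mul_sum, hM1, hp]

/-- `perspective (obsProb (M a z)) (M a z).vecMulLinear v p` is `σ(a,z,p) · v(τ(a,z,p))` when
`σ(a,z,p) > 0`, and `0` otherwise. -/
def bellman (β : ℝ) (c : A → I → ℝ) (M : A → Z → Matrix I I ℝ) (v : (I → ℝ) → ℝ)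
    (p : I → ℝ) : ℝ :=
  univ.inf' univ_nonempty fun a =>
    c a ⬝ᵥ p + β * ∑ z, perspective (obsProb (M a z)) (M a z).vecMulLinear v p

variable {β : ℝ} {c : A → I → ℝ} {M : A → Z → Matrix I I ℝ}

theorem bellman_isSupContractionOn (hβ0 : 0 ≤ β) (hM0 : ∀ a z i j, 0 ≤ M a z i j)
    (hM1 : ∀ a i, ∑ z, ∑ j, M a z i j = 1) :
    IsSupContractionOn (stdSimplex ℝ I) β (bellman β c M) := by
  intro v w K hK p hp
  refine abs_inf'_sub_inf'_le _ fun a _ => ?_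
  calc |c a ⬝ᵥ p + β * ∑ z, perspective (obsProb (M a z)) (M a z).vecMulLinear v p -
        (c a ⬝ᵥ p + β * ∑ z, perspective (obsProb (M a z)) (M a z).vecMulLinear w p)|
      = β * |∑ z, (perspective (obsProb (M a z)) (M a z).vecMulLinear v p -
          perspective (obsProb (M a z)) (M a z).vecMulLinear w p)| := by
        rw [sum_sub_distrib, add_sub_add_left_eq_sub, ← mul_sub, abs_mul, abs_of_nonneg hβ0]
    _ ≤ β * ∑ z, obsProb (M a z) p * K := by
        refine mul_le_mul_of_nonneg_left ((abs_sum_le_sum_abs _ _).trans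
          (sum_le_sum fun z _ => abs_perspective_sub_le hK (obsProb_nonneg (hM0 a z) hp.1)
            (inv_smul_vecMul_mem_stdSimplex (hM0 a z) hp.1))) hβ0
    _ = β * K := by rw [← sum_mul, sum_obsProb (hM1 a) hp.2, one_mul]

theorem bellman_zero_bounded : ∃ C, ∀ p ∈ stdSimplex ℝ I, |bellman β c M 0 p| ≤ C := by
  have hcont : Continuous (bellman β c M 0) := by
    change Continuous fun p => bellman β c M 0 p
    simp only [bellman, perspective_zero, Pi.zero_apply, sum_const_zero, mul_zero, add_zero]
    exact Continuous.finset_inf'_apply _ fun a _ => continuous_const.dotProduct continuous_id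
  simpa using (isCompact_stdSimplex ℝ I).exists_bound_of_continuousOn hcont.continuousOn

theorem bellman_concaveOn (hβ0 : 0 ≤ β) (hM0 : ∀ a z i j, 0 ≤ M a z i j)
    {v : (I → ℝ) → ℝ} (hv : ConcaveOn ℝ (stdSimplex ℝ I) v) :
    ConcaveOn ℝ (stdSimplex ℝ I) (bellman β c M v) := by
  have hΔ := convex_stdSimplex ℝ I
  refine ConcaveOn.finset_inf' _ fun a _ => ?_
  refine (dotProductBilin ℝ ℝ (c a)).concaveOn hΔ |>.add
    ((ConcaveOn.finset_sum hΔ fun z _ => ?_).smul hβ0)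
  exact hv.perspective hΔ (fun p hp => obsProb_nonneg (hM0 a z) hp.1)
    (fun p hp => vecMul_eq_zero_of_obsProb_eq_zero (hM0 a z) hp.1)
    (fun p hp => inv_smul_vecMul_mem_stdSimplex (hM0 a z) hp.1)

theorem bellman_iterate_concaveOn (hβ0 : 0 ≤ β) (hM0 : ∀ a z i j, 0 ≤ M a z i j) (n : ℕ) :
    ConcaveOn ℝ (stdSimplex ℝ I) ((bellman β c M)^[n] 0) := by
  induction n with
  | zero => exact concaveOn_const 0 (convex_stdSimplex ℝ I)
  | succ n ih =>
    rw [iterate_succ_apply']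
    exact bellman_concaveOn hβ0 hM0 ih

end Belief

theorem belief_bellman_contraction_concave_fixed_point_general
    {I A Z : Type*} [Fintype I] [Fintype A] [Nonempty A]
    [Fintype Z]
    (β : ℝ) (hβ0 : 0 ≤ β) (hβ1 : β < 1)
    (c : A → I → ℝ) (M : A → Z → Matrix I I ℝ)
    (hM0 : ∀ a z i j, 0 ≤ M a z i j)
    (hM1 : ∀ a i, ∑ z, ∑ j, M a z i j = 1)
    (Δ : Set (I → ℝ)) (hΔ : Δ = {p : I → ℝ | (∀ i, 0 ≤ p i) ∧ ∑ i, p i = 1})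
    (σ : A → Z → (I → ℝ) → ℝ)
    (hσ : ∀ a z p, σ a z p = ∑ i, ∑ j, p i * M a z i j)
    (τ : A → Z → (I → ℝ) → (I → ℝ))
    (hτ : ∀ a z p j, τ a z p j = (∑ i, p i * M a z i j) / σ a z p)
    (H : ((I → ℝ) → ℝ) → ((I → ℝ) → ℝ))
    (hH : ∀ v p, H v p = Finset.univ.inf' Finset.univ_nonempty
          (fun a : A => ∑ i, c a i * p i +
            β * ∑ z ∈ Finset.univ.filter (fun z => 0 < σ a z p),
              σ a z p * v (τ a z p))) :
    (∀ v w : (I → ℝ) → ℝ,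
        (∃ B, ∀ p ∈ Δ, |v p| ≤ B) → (∃ B, ∀ p ∈ Δ, |w p| ≤ B) →
        ∀ p ∈ Δ, |H v p - H w p| ≤ β * ⨆ q : Δ, |v q.1 - w q.1|) ∧
    ∃ vstar : (I → ℝ) → ℝ,
      (∃ B, ∀ p ∈ Δ, |vstar p| ≤ B) ∧
      (∀ p ∈ Δ, H vstar p = vstar p) ∧
      (∀ w : (I → ℝ) → ℝ, (∃ B, ∀ p ∈ Δ, |w p| ≤ B) →
        (∀ p ∈ Δ, H w p = w p) → ∀ p ∈ Δ, w p = vstar p) ∧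
      ConcaveOn ℝ Δ vstar := by
  obtain rfl : Δ = stdSimplex ℝ I := hΔ
  obtain rfl : σ = fun a z => ⇑(obsProb (M a z)) := by
    funext a z p
    rw [hσ, obsProb_apply]
    simp only [vecMul, dotProduct]
    exact sum_comm
  have hτ' : ∀ a z p, τ a z p = (obsProb (M a z) p)⁻¹ • (p ᵥ* M a z) := fun a z p =>
    funext fun j => by rw [hτ, div_eq_inv_mul]; rfl
  obtain rfl : H = bellman β c M := by
    funext v p
    simp only [hH, bellman, sum_filter, hτ', perspective]
    rfl
  have hT := bellman_isSupContractionOn (c := c) hβ0 hM0 hM1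
  obtain ⟨v, hvB, hvfix, hvuniq, hvlim⟩ :=
    hT.exists_unique_fixedPoint bellman_zero_bounded hβ0 hβ1
  exact ⟨fun _ _ => hT.abs_sub_le_iSup, v, hvB, hvfix, hvuniq,
    concaveOn_of_tendsto (convex_stdSimplex ℝ I)
      (Eventually.of_forall (bellman_iterate_concaveOn hβ0 hM0)) hvlim⟩

/-- The belief-space Bellman operator of a POMDP is Lipschitz with constant `β` in the
supremum distance on functions bounded on the belief simplex `Δ`; hence it has a unique
bounded fixed point `v*` on `Δ`, and `v*` is concave on `Δ`. -/
theorem belief_bellman_contraction_concave_fixed_point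
    {I A Z : Type*} [Fintype I] [Nonempty I] [Fintype A] [Nonempty A]
    [Fintype Z] [Nonempty Z]
    (β : ℝ) (hβ0 : 0 ≤ β) (hβ1 : β < 1)
    (c : A → I → ℝ) (M : A → Z → Matrix I I ℝ)
    (hM0 : ∀ a z i j, 0 ≤ M a z i j)
    (hM1 : ∀ a i, ∑ z, ∑ j, M a z i j = 1)
    (Δ : Set (I → ℝ)) (hΔ : Δ = {p : I → ℝ | (∀ i, 0 ≤ p i) ∧ ∑ i, p i = 1})
    (σ : A → Z → (I → ℝ) → ℝ)
    (hσ : ∀ a z p, σ a z p = ∑ i, ∑ j, p i * M a z i j)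
    (τ : A → Z → (I → ℝ) → (I → ℝ))
    (hτ : ∀ a z p j, τ a z p j = (∑ i, p i * M a z i j) / σ a z p)
    (H : ((I → ℝ) → ℝ) → ((I → ℝ) → ℝ))
    (hH : ∀ v p, H v p = Finset.univ.inf' Finset.univ_nonempty
          (fun a : A => ∑ i, c a i * p i +
            β * ∑ z ∈ Finset.univ.filter (fun z => 0 < σ a z p),
              σ a z p * v (τ a z p))) :
    (∀ v w : (I → ℝ) → ℝ,
        (∃ B, ∀ p ∈ Δ, |v p| ≤ B) → (∃ B, ∀ p ∈ Δ, |w p| ≤ B) →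
        ∀ p ∈ Δ, |H v p - H w p| ≤ β * ⨆ q : Δ, |v q.1 - w q.1|) ∧
    ∃ vstar : (I → ℝ) → ℝ,
      (∃ B, ∀ p ∈ Δ, |vstar p| ≤ B) ∧
      (∀ p ∈ Δ, H vstar p = vstar p) ∧
      (∀ w : (I → ℝ) → ℝ, (∃ B, ∀ p ∈ Δ, |w p| ≤ B) →
        (∀ p ∈ Δ, H w p = w p) → ∀ p ∈ Δ, w p = vstar p) ∧
      ConcaveOn ℝ Δ vstar :=
  belief_bellman_contraction_concave_fixed_point_general β hβ0 hβ1 c M hM0 hM1 Δ hΔ σ hσ τ hτ H hH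
end

section
/- For a row-stochastic matrix Q and 0 ≤ β < 1, the matrix 1 − β • Q (where 1 is the identity matrix) is invertible, and the unique solution of the equation g = r + β · Q.mulVec g is g* = (1 − β • Q)⁻¹.mulVec r. -/
/-- For a row-stochastic matrix `Q` and `0 ≤ β < 1`, the matrix `1 - β • Q` is
invertible, and the unique solution of `g = r + β • Q.mulVec g` is
`(1 - β • Q)⁻¹.mulVec r`. -/
theorem one_sub_beta_smul_stochastic_invertible
    {I : Type*} [Fintype I] [DecidableEq I] [Nonempty I]
    (β : ℝ) (hβ0 : 0 ≤ β) (hβ1 : β < 1)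
    (r : I → ℝ) (Q : Matrix I I ℝ)
    (hQ0 : ∀ i j, 0 ≤ Q i j) (hQ1 : ∀ i, ∑ j, Q i j = 1) :
    IsUnit (1 - β • Q) ∧
    ∀ g : I → ℝ, g = r + β • Q.mulVec g ↔ g = (1 - β • Q)⁻¹.mulVec r := by
  set A : Matrix I I ℝ := 1 - β • Q with hA
  have hmul : ∀ g : I → ℝ, A.mulVec g = g - β • Q.mulVec g := by
    intro g
    simp [hA, Matrix.sub_mulVec, Matrix.smul_mulVec]
  have hker : ∀ v : I → ℝ, A.mulVec v = 0 → v = 0 := by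
    intro v hv
    have hv' : ∀ i, v i = β * (Q.mulVec v) i := by
      intro i
      have := congrFun (hmul v) i
      rw [hv] at this
      have : 0 = v i - β * (Q.mulVec v) i := by simpa using this
      linarith
    by_contra hvne
    obtain ⟨i0, hi0⟩ := Finset.exists_max_image Finset.univ (fun i => |v i|)
      (Finset.univ_nonempty)
    obtain ⟨-, hi0max⟩ := hi0
    have hpos : 0 < |v i0| := by
      rcases Function.ne_iff.mp hvne with ⟨j, hj⟩
      have := hi0max j (Finset.mem_univ j)
      have : 0 < |v j| := abs_pos.mpr hj
      linarith [hi0max j (Finset.mem_univ j)]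
    have hbound : |v i0| ≤ β * |v i0| := by
      calc |v i0| = |β * (Q.mulVec v) i0| := by rw [hv' i0]
        _ = β * |(Q.mulVec v) i0| := by rw [abs_mul, abs_of_nonneg hβ0]
        _ ≤ β * (∑ j, Q i0 j * |v j|) := by
            apply mul_le_mul_of_nonneg_left _ hβ0
            calc |(Q.mulVec v) i0| = |∑ j, Q i0 j * v j| := rfl
              _ ≤ ∑ j, |Q i0 j * v j| := Finset.abs_sum_le_sum_abs _ _
              _ = ∑ j, Q i0 j * |v j| := by
                  refine Finset.sum_congr rfl fun j _ => ?_
                  rw [abs_mul, abs_of_nonneg (hQ0 i0 j)]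
        _ ≤ β * (∑ j, Q i0 j * |v i0|) := by
            apply mul_le_mul_of_nonneg_left _ hβ0
            refine Finset.sum_le_sum fun j _ => ?_
            exact mul_le_mul_of_nonneg_left (hi0max j (Finset.mem_univ j)) (hQ0 i0 j)
        _ = β * |v i0| := by rw [← Finset.sum_mul, hQ1 i0, one_mul]
    nlinarith
  have hdet : A.det ≠ 0 := by
    intro h
    obtain ⟨v, hvne, hv⟩ := (Matrix.exists_mulVec_eq_zero_iff).mpr h
    exact hvne (hker v hv)
  have hunit : IsUnit A := by
    rw [Matrix.isUnit_iff_isUnit_det]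
    exact isUnit_iff_ne_zero.mpr hdet
  refine ⟨hunit, fun g => ?_⟩
  have hinv : A⁻¹ * A = 1 := Matrix.nonsing_inv_mul A (isUnit_iff_ne_zero.mpr hdet)
  have hinv' : A * A⁻¹ = 1 := Matrix.mul_nonsing_inv A (isUnit_iff_ne_zero.mpr hdet)
  constructor
  · intro hg
    have : A.mulVec g = r := by
      rw [hmul]
      nth_rewrite 1 [hg]
      abel
    calc g = (1 : Matrix I I ℝ).mulVec g := by simp
      _ = (A⁻¹ * A).mulVec g := by rw [hinv]
      _ = A⁻¹.mulVec (A.mulVec g) := by rw [← Matrix.mulVec_mulVec]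
      _ = A⁻¹.mulVec r := by rw [this]
  · intro hg
    have hAg : A.mulVec g = r := by
      rw [hg, Matrix.mulVec_mulVec, hinv', Matrix.one_mulVec]
    have h2 := hmul g
    rw [hAg] at h2
    rw [h2]; abel
end

section
/- The belief-space policy-evaluation operator is a contraction whose fixed point is linear in the belief: L is Lipschitz with constant β in the supremum distance on bounded functions on Δ, hence has a unique bounded fixed point, and this fixed point equals p ↦ ∑_{i} g* i · p i on Δ, where g* : I → ℝ is the unique solution of g = r + β · (∑_{z ∈ Z} M z).mulVec g. -/
/-- The belief-space policy-evaluation operator is a contraction (Lipschitz with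
constant `β` in the supremum distance on functions bounded on the belief simplex `Δ`)
whose unique bounded fixed point is linear in the belief: it equals
`p ↦ ∑ i, g* i * p i` on `Δ`, where `g*` is the unique solution of
`g = r + β • (∑ z, M z).mulVec g`. -/
theorem belief_policy_evaluation_fixed_point_linear
    {I Z : Type*} [Fintype I] [Nonempty I] [Fintype Z] [Nonempty Z]
    (β : ℝ) (hβ0 : 0 ≤ β) (hβ1 : β < 1)
    (r : I → ℝ) (M : Z → Matrix I I ℝ)
    (hM0 : ∀ z i j, 0 ≤ M z i j)
    (hM1 : ∀ i, ∑ z, ∑ j, M z i j = 1)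
    (Δ : Set (I → ℝ)) (hΔ : Δ = {p : I → ℝ | (∀ i, 0 ≤ p i) ∧ ∑ i, p i = 1})
    (σ : Z → (I → ℝ) → ℝ)
    (hσ : ∀ z p, σ z p = ∑ i, ∑ j, p i * M z i j)
    (τ : Z → (I → ℝ) → (I → ℝ))
    (hτ : ∀ z p j, τ z p j = (∑ i, p i * M z i j) / σ z p)
    (L : ((I → ℝ) → ℝ) → ((I → ℝ) → ℝ))
    (hL : ∀ v p, L v p = ∑ i, r i * p i +
        β * ∑ z ∈ Finset.univ.filter (fun z => 0 < σ z p), σ z p * v (τ z p))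
    (gstar : I → ℝ) (hgstar : gstar = r + β • (∑ z, M z).mulVec gstar) :
    (∀ v w : (I → ℝ) → ℝ,
        (∃ B, ∀ p ∈ Δ, |v p| ≤ B) → (∃ B, ∀ p ∈ Δ, |w p| ≤ B) →
        ∀ p ∈ Δ, |L v p - L w p| ≤ β * ⨆ q : Δ, |v q.1 - w q.1|) ∧
    ∃ vstar : (I → ℝ) → ℝ,
      (∃ B, ∀ p ∈ Δ, |vstar p| ≤ B) ∧
      (∀ p ∈ Δ, L vstar p = vstar p) ∧
      (∀ w : (I → ℝ) → ℝ, (∃ B, ∀ p ∈ Δ, |w p| ≤ B) →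
        (∀ p ∈ Δ, L w p = w p) → ∀ p ∈ Δ, w p = vstar p) ∧
      ∀ p ∈ Δ, vstar p = ∑ i, gstar i * p i := by
  -- basic facts
  have hcard : (0 : ℝ) < Fintype.card I := by
    exact_mod_cast Fintype.card_pos
  have hΔne : Δ.Nonempty := by
    refine ⟨fun _ => (Fintype.card I : ℝ)⁻¹, ?_⟩
    rw [hΔ]
    refine ⟨fun i => by positivity, ?_⟩
    rw [Finset.sum_const, Finset.card_univ, nsmul_eq_mul]
    field_simp
  haveI : Nonempty Δ := ⟨⟨hΔne.choose, hΔne.choose_spec⟩⟩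
  have hmem : ∀ p ∈ Δ, (∀ i, 0 ≤ p i) ∧ ∑ i, p i = 1 := by
    intro p hp; rw [hΔ] at hp; exact hp
  -- σ is nonnegative on Δ
  have hσ0 : ∀ z, ∀ p ∈ Δ, 0 ≤ σ z p := by
    intro z p hp
    rw [hσ]
    exact Finset.sum_nonneg fun i _ => Finset.sum_nonneg fun j _ =>
      mul_nonneg ((hmem p hp).1 i) (hM0 z i j)
  -- σ sums to 1 on Δ
  have hσsum : ∀ p ∈ Δ, ∑ z, σ z p = 1 := by
    intro p hp
    calc ∑ z, σ z p = ∑ z, ∑ i, ∑ j, p i * M z i j := by simp [hσ]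
      _ = ∑ i, ∑ z, ∑ j, p i * M z i j := Finset.sum_comm
      _ = ∑ i, p i * ∑ z, ∑ j, M z i j := by
          simp [Finset.mul_sum]
      _ = ∑ i, p i := by simp [hM1]
      _ = 1 := (hmem p hp).2
  -- the numerators sum to σ
  have hnum : ∀ z p, ∑ j, ∑ i, p i * M z i j = σ z p := by
    intro z p; rw [hσ]; exact Finset.sum_comm
  -- posterior stays in Δ
  have hτΔ : ∀ z, ∀ p ∈ Δ, 0 < σ z p → τ z p ∈ Δ := by
    intro z p hp hz
    rw [hΔ]
    constructor
    · intro j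
      rw [hτ]
      exact div_nonneg (Finset.sum_nonneg fun i _ =>
        mul_nonneg ((hmem p hp).1 i) (hM0 z i j)) hz.le
    · have : ∑ j, τ z p j = (∑ j, ∑ i, p i * M z i j) / σ z p := by
        rw [Finset.sum_div]; exact Finset.sum_congr rfl fun j _ => hτ z p j
      rw [this, hnum, div_self hz.ne']
  have hbound : ∀ p ∈ Δ, |∑ i, gstar i * p i| ≤ ∑ i, |gstar i| := by
    intro p hp
    refine le_trans (Finset.abs_sum_le_sum_abs _ _) (Finset.sum_le_sum fun i _ => ?_)
    rw [abs_mul]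
    have hpi : |p i| ≤ 1 := by
      rw [abs_of_nonneg ((hmem p hp).1 i)]
      refine le_trans (Finset.single_le_sum (f := p)
        (fun j _ => (hmem p hp).1 j) (Finset.mem_univ i)) (le_of_eq (hmem p hp).2)
    exact mul_le_of_le_one_right (abs_nonneg _) hpi
  -- the contraction property
  have key : ∀ v w : (I → ℝ) → ℝ,
      (∃ B, ∀ p ∈ Δ, |v p| ≤ B) → (∃ B, ∀ p ∈ Δ, |w p| ≤ B) →
      ∀ p ∈ Δ, |L v p - L w p| ≤ β * ⨆ q : Δ, |v q.1 - w q.1| := by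
    intro v w ⟨Bv, hBv⟩ ⟨Bw, hBw⟩ p hp
    set S := ⨆ q : Δ, |v q.1 - w q.1| with hS
    have hbdd : BddAbove (Set.range fun q : Δ => |v q.1 - w q.1|) := by
      refine ⟨Bv + Bw, ?_⟩
      rintro x ⟨q, rfl⟩
      calc |v q.1 - w q.1| ≤ |v q.1| + |w q.1| := abs_sub _ _
        _ ≤ Bv + Bw := add_le_add (hBv q.1 q.2) (hBw q.1 q.2)
    have hSle : ∀ q : Δ, |v q.1 - w q.1| ≤ S := fun q => le_ciSup hbdd q
    have hS0 : 0 ≤ S := le_trans (abs_nonneg _) (hSle (Classical.arbitrary Δ))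
    have hdiff : L v p - L w p =
        β * ∑ z ∈ Finset.univ.filter (fun z => 0 < σ z p),
          σ z p * (v (τ z p) - w (τ z p)) := by
      rw [hL, hL]
      rw [show ∀ a b c : ℝ, (a + β * b) - (a + β * c) = β * (b - c) from
        fun a b c => by ring]
      rw [← Finset.sum_sub_distrib]
      congr 1
      exact Finset.sum_congr rfl fun z _ => by ring
    rw [hdiff, abs_mul, abs_of_nonneg hβ0]
    refine mul_le_mul_of_nonneg_left ?_ hβ0
    calc |∑ z ∈ Finset.univ.filter (fun z => 0 < σ z p),
            σ z p * (v (τ z p) - w (τ z p))|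
        ≤ ∑ z ∈ Finset.univ.filter (fun z => 0 < σ z p),
            |σ z p * (v (τ z p) - w (τ z p))| := Finset.abs_sum_le_sum_abs _ _
      _ ≤ ∑ z ∈ Finset.univ.filter (fun z => 0 < σ z p), σ z p * S := by
          refine Finset.sum_le_sum fun z hz => ?_
          rw [Finset.mem_filter] at hz
          rw [abs_mul, abs_of_nonneg (hσ0 z p hp)]
          exact mul_le_mul_of_nonneg_left
            (hSle ⟨τ z p, hτΔ z p hp hz.2⟩) (hσ0 z p hp)
      _ = (∑ z ∈ Finset.univ.filter (fun z => 0 < σ z p), σ z p) * S := by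
          rw [Finset.sum_mul]
      _ ≤ 1 * S := by
          refine mul_le_mul_of_nonneg_right ?_ hS0
          calc ∑ z ∈ Finset.univ.filter (fun z => 0 < σ z p), σ z p
              ≤ ∑ z, σ z p := Finset.sum_le_sum_of_subset_of_nonneg
                (Finset.filter_subset _ _) (fun z _ _ => hσ0 z p hp)
            _ = 1 := hσsum p hp
      _ = S := one_mul S
  have hfix : ∀ p ∈ Δ, L (fun p => ∑ i, gstar i * p i) p = ∑ i, gstar i * p i := by
    intro p hp
    have hg : ∀ i, gstar i = r i + β * ∑ j, (∑ z, M z i j) * gstar j := by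
      intro i
      have := congrFun hgstar i
      simpa [Matrix.mulVec, dotProduct, Matrix.sum_apply] using this
    have hzero : ∀ z, ¬ 0 < σ z p → ∀ j, ∑ i, p i * M z i j = 0 := by
      intro z hz j
      have hσz : σ z p = 0 := le_antisymm (not_lt.mp hz) (hσ0 z p hp)
      have hnn : ∀ j' ∈ Finset.univ, 0 ≤ ∑ i, p i * M z i j' := fun j' _ =>
        Finset.sum_nonneg fun i _ => mul_nonneg ((hmem p hp).1 i) (hM0 z i j')
      have hsum0 : ∑ j', ∑ i, p i * M z i j' = 0 := by rw [hnum, hσz]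
      exact (Finset.sum_eq_zero_iff_of_nonneg hnn).mp hsum0 j (Finset.mem_univ j)
    calc L (fun p => ∑ i, gstar i * p i) p
        = ∑ i, r i * p i + β * ∑ z ∈ Finset.univ.filter (fun z => 0 < σ z p),
            σ z p * ∑ j, gstar j * τ z p j := hL _ p
      _ = ∑ i, r i * p i + β * ∑ z, ∑ j, gstar j * ∑ i, p i * M z i j := by
          congr 1
          congr 1
          rw [Finset.sum_filter]
          refine Finset.sum_congr rfl fun z _ => ?_
          by_cases hz : 0 < σ z p
          · rw [if_pos hz, Finset.mul_sum]
            refine Finset.sum_congr rfl fun j _ => ?_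
            rw [hτ]
            field_simp
          · rw [if_neg hz]
            refine (Finset.sum_eq_zero fun j _ => ?_).symm
            rw [hzero z hz j, mul_zero]
      _ = ∑ i, p i * gstar i := by
          have tri : ∀ (f : Z → I → I → ℝ),
              ∑ z, ∑ j, ∑ i, f z j i = ∑ i, ∑ j, ∑ z, f z j i := by
            intro f
            rw [Finset.sum_comm]
            rw [show (∑ j, ∑ z, ∑ i, f z j i) = ∑ j, ∑ i, ∑ z, f z j i from
              Finset.sum_congr rfl fun j _ => Finset.sum_comm]
            exact Finset.sum_comm
          have swap : ∑ z, ∑ j, gstar j * ∑ i, p i * M z i j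
              = ∑ i, p i * ∑ j, (∑ z, M z i j) * gstar j := by
            simp only [Finset.mul_sum, Finset.sum_mul]
            rw [tri]
            exact Finset.sum_congr rfl fun i _ => Finset.sum_congr rfl fun j _ =>
              Finset.sum_congr rfl fun z _ => by ring
          rw [swap, Finset.mul_sum, ← Finset.sum_add_distrib]
          refine Finset.sum_congr rfl fun i _ => ?_
          rw [hg i]
          ring
      _ = ∑ i, gstar i * p i := Finset.sum_congr rfl fun i _ => mul_comm _ _
  refine ⟨key, fun p => ∑ i, gstar i * p i, ⟨∑ i, |gstar i|, hbound⟩, hfix, ?_, fun p _ => rfl⟩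
  · -- uniqueness
    intro w ⟨Bw, hBw⟩ hwfix p hp
    set vstar : (I → ℝ) → ℝ := fun p => ∑ i, gstar i * p i with hv
    have hvb : ∃ B, ∀ p ∈ Δ, |vstar p| ≤ B := ⟨∑ i, |gstar i|, hbound⟩
    have hvfix : ∀ p ∈ Δ, L vstar p = vstar p := hfix
    set S := ⨆ q : Δ, |w q.1 - vstar q.1| with hS
    have hbdd : BddAbove (Set.range fun q : Δ => |w q.1 - vstar q.1|) := by
      refine ⟨Bw + ∑ i, |gstar i|, ?_⟩
      rintro x ⟨q, rfl⟩
      exact le_trans (abs_sub _ _) (add_le_add (hBw q.1 q.2) (hbound q.1 q.2))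
    have hSle : ∀ q : Δ, |w q.1 - vstar q.1| ≤ S := fun q => le_ciSup hbdd q
    have hSβ : ∀ q : Δ, |w q.1 - vstar q.1| ≤ β * S := by
      intro q
      have := key w vstar ⟨Bw, hBw⟩ hvb q.1 q.2
      rwa [hwfix q.1 q.2, hvfix q.1 q.2] at this
    have hS0 : S ≤ β * S := ciSup_le hSβ
    have hSnp : S ≤ 0 := by nlinarith
    have := hSβ ⟨p, hp⟩
    have habs : |w p - vstar p| ≤ 0 := le_trans this (by nlinarith)
    have h0 : w p - vstar p = 0 := abs_nonpos_iff.mp habs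
    linarith [h0]
end

section
/- Garbling the observation channel cannot decrease the value of a concave positively homogeneous functional of the unnormalized posterior (value of information): define Q : S → Z' → ℝ by Q s z' = ∑_{z ∈ Z} P s z · R z z'. Then for every prior p : S → ℝ with p s ≥ 0 for all s, ∑_{z' ∈ Z'} f( s ↦ p s · Q s z' ) ≥ ∑_{z ∈ Z} f( s ↦ p s · P s z ). -/
/-!
Concavity together with positive homogeneity makes `f` superadditive on the cone, hence
`∑ z, R z z' * f (x z) ≤ f (∑ z, R z z' • x z)` for the unnormalized posteriors `x z`. The
right-hand side is the unnormalized posterior of the garbled signal `z'`, and summing over `z'`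
collapses the left-hand side to `∑ z, f (x z)` because every row of `R` sums to one.
-/

open Finset

namespace ConcaveOn

variable {E ι : Type*} [AddCommGroup E] [Module ℝ E] {C : PointedCone ℝ E} {f : E → ℝ}

lemma add_le_map_add_of_posHomogeneous (hconc : ConcaveOn ℝ C f)
    (hhom : ∀ t : ℝ, 0 ≤ t → ∀ x ∈ C, f (t • x) = t * f x)
    {x y : E} (hx : x ∈ C) (hy : y ∈ C) : f x + f y ≤ f (x + y) := by
  have hmid := hconc.2 hx hy (by norm_num : (0 : ℝ) ≤ 1 / 2) (by norm_num : (0 : ℝ) ≤ 1 / 2)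
    (by norm_num)
  have hmid_mem : (1 / 2 : ℝ) • x + (1 / 2 : ℝ) • y ∈ C :=
    C.convex hx hy (by norm_num) (by norm_num) (by norm_num)
  have hsum : x + y = (2 : ℝ) • ((1 / 2 : ℝ) • x + (1 / 2 : ℝ) • y) := by
    rw [smul_add, smul_smul, smul_smul]; norm_num
  rw [hsum, hhom 2 (by norm_num) _ hmid_mem]
  simp only [smul_eq_mul] at hmid
  linarith

lemma sum_le_map_sum_of_posHomogeneous (hconc : ConcaveOn ℝ C f)
    (hhom : ∀ t : ℝ, 0 ≤ t → ∀ x ∈ C, f (t • x) = t * f x)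
    (t : Finset ι) {x : ι → E} (hx : ∀ i ∈ t, x i ∈ C) :
    ∑ i ∈ t, f (x i) ≤ f (∑ i ∈ t, x i) := by
  classical
  induction t using Finset.induction_on with
  | empty => simpa using (hhom 0 le_rfl 0 C.zero_mem).ge
  | insert a t ha ih =>
    rw [sum_insert ha, sum_insert ha]
    have hxt : ∀ i ∈ t, x i ∈ C := fun i hi => hx i (mem_insert_of_mem hi)
    calc f (x a) + ∑ i ∈ t, f (x i) ≤ f (x a) + f (∑ i ∈ t, x i) := by gcongr; exact ih hxt
      _ ≤ f (x a + ∑ i ∈ t, x i) :=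
        add_le_map_add_of_posHomogeneous hconc hhom (hx a (mem_insert_self a t)) (C.sum_mem hxt)

lemma sum_mul_le_map_sum_smul_of_posHomogeneous (hconc : ConcaveOn ℝ C f)
    (hhom : ∀ t : ℝ, 0 ≤ t → ∀ x ∈ C, f (t • x) = t * f x)
    (t : Finset ι) {w : ι → ℝ} {x : ι → E} (hw : ∀ i ∈ t, 0 ≤ w i) (hx : ∀ i ∈ t, x i ∈ C) :
    ∑ i ∈ t, w i * f (x i) ≤ f (∑ i ∈ t, w i • x i) := by
  calc ∑ i ∈ t, w i * f (x i) = ∑ i ∈ t, f (w i • x i) :=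
        sum_congr rfl fun i hi => (hhom _ (hw i hi) _ (hx i hi)).symm
    _ ≤ f (∑ i ∈ t, w i • x i) :=
        sum_le_map_sum_of_posHomogeneous hconc hhom t fun i hi => C.smul_mem (hw i hi) (hx i hi)

end ConcaveOn

theorem garbling_increases_value_of_information_general
    {S Z Z' : Type*} [Fintype S] [Fintype Z] [Fintype Z']
    (P : S → Z → ℝ) (hP0 : ∀ s z, 0 ≤ P s z)
    (R : Z → Z' → ℝ) (hR0 : ∀ z z', 0 ≤ R z z') (hR1 : ∀ z, ∑ z', R z z' = 1)
    (f : (S → ℝ) → ℝ)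
    (hconc : ConcaveOn ℝ {x : S → ℝ | ∀ s, 0 ≤ x s} f)
    (hhom : ∀ t : ℝ, 0 ≤ t → ∀ x : S → ℝ, (∀ s, 0 ≤ x s) → f (t • x) = t * f x)
    (Q : S → Z' → ℝ) (hQ : ∀ s z', Q s z' = ∑ z, P s z * R z z')
    (p : S → ℝ) (hp : ∀ s, 0 ≤ p s) :
    ∑ z, f (fun s => p s * P s z) ≤ ∑ z', f (fun s => p s * Q s z') := by
  set x : Z → S → ℝ := fun z s => p s * P s z
  -- the orthant in `hconc` and `hhom` is `PointedCone.positive` up to unfolding `Pi.le_def`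
  have hx : ∀ z, x z ∈ PointedCone.positive ℝ (S → ℝ) := fun z s => mul_nonneg (hp s) (hP0 s z)
  have hgarble : ∀ z', ∑ z, R z z' • x z = fun s => p s * Q s z' := by
    intro z'
    ext s
    simp only [Finset.sum_apply, Pi.smul_apply, smul_eq_mul, hQ, mul_sum, x]
    exact sum_congr rfl fun z _ => by ring
  calc ∑ z, f (x z) = ∑ z, ∑ z', R z z' * f (x z) := by simp only [← sum_mul, hR1, one_mul]
    _ = ∑ z', ∑ z, R z z' * f (x z) := sum_comm
    _ ≤ ∑ z', f (∑ z, R z z' • x z) := sum_le_sum fun z' _ =>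
        hconc.sum_mul_le_map_sum_smul_of_posHomogeneous hhom univ
          (fun z _ => hR0 z z') (fun z _ => hx z)
    _ = ∑ z', f (fun s => p s * Q s z') := by simp only [hgarble]

/-- Value of information: garbling the observation channel `P` by a stochastic matrix
`R` cannot decrease the value of a concave, positively homogeneous functional `f` of
the unnormalized posterior.  With `Q s z' = ∑ z, P s z * R z z'`, for every
nonnegative prior `p`,
`∑ z', f (s ↦ p s * Q s z') ≥ ∑ z, f (s ↦ p s * P s z)`. -/
theorem garbling_increases_value_of_information
    {S Z Z' : Type*} [Fintype S] [Nonempty S] [Fintype Z] [Nonempty Z]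
    [Fintype Z'] [Nonempty Z']
    (P : S → Z → ℝ) (hP0 : ∀ s z, 0 ≤ P s z) (hP1 : ∀ s, ∑ z, P s z = 1)
    (R : Z → Z' → ℝ) (hR0 : ∀ z z', 0 ≤ R z z') (hR1 : ∀ z, ∑ z', R z z' = 1)
    (f : (S → ℝ) → ℝ)
    (hconc : ConcaveOn ℝ {x : S → ℝ | ∀ s, 0 ≤ x s} f)
    (hhom : ∀ t : ℝ, 0 ≤ t → ∀ x : S → ℝ, (∀ s, 0 ≤ x s) → f (t • x) = t * f x)
    (Q : S → Z' → ℝ) (hQ : ∀ s z', Q s z' = ∑ z, P s z * R z z')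
    (p : S → ℝ) (hp : ∀ s, 0 ≤ p s) :
    ∑ z, f (fun s => p s * P s z) ≤ ∑ z', f (fun s => p s * Q s z') :=
  garbling_increases_value_of_information_general P hP0 R hR0 hR1 f hconc hhom Q hQ p hp
end
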